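/- Let H be a hypergraph with h vertices and let G be a hypergraph equipped with a coloring c: V(G) → {1,…,h}. Then ColHom(G,H) = Σ_{I ⊆ {1,…,h}} (−1)^{h−|I|} · Hom(G(V_I), H), where V_I = {v ∈ V(G) : c(v) ∈ I} and G(V_I) is the induced subhypergraph of G on V_I (hyperedges entirely contained in V_I). -/

import Mathlib

open scoped Classical

noncomputable section

/-- A hypergraph: a finite vertex set and a finite set of hyperedges, with vertices in `ℕ`. -/
structure FinHypergraph where
  verts : Finset ℕ
  edges : Finset (Finset ℕ)

namespace FinHypergraph

/-- Well-formedness: every hyperedge is a nonempty subset of the vertex set. -/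
def Good (G : FinHypergraph) : Prop := ∀ e ∈ G.edges, e ⊆ G.verts ∧ e.Nonempty

/-- The rank of a hypergraph: the maximum arity of a hyperedge. -/
def rank (G : FinHypergraph) : ℕ := G.edges.sup Finset.card

/-- The induced `l`-trimmed subhypergraph of `G` on `S`. -/
def trim (G : FinHypergraph) (S : Finset ℕ) (l : ℕ∞) : FinHypergraph :=
  ⟨G.verts ∩ S,
    (G.edges.filter fun e => ((e \ S).card : ℕ∞) ≤ l ∧ (e ∩ S).Nonempty).image fun e => e ∩ S⟩

/-- The degree of a vertex: the number of hyperedges containing it. -/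
def degree (G : FinHypergraph) (v : ℕ) : ℕ := (G.edges.filter fun e => v ∈ e).card

/-- The `l`-degeneracy of a hypergraph: the least `κ` such that every nonempty induced
`l`-trimmed subhypergraph has a vertex of degree at most `κ`. -/
def degeneracy (G : FinHypergraph) (l : ℕ∞) : ℕ :=
  sInf {κ : ℕ | ∀ S ⊆ G.verts, S.Nonempty → ∃ v ∈ S, (G.trim S l).degree v ≤ κ}

/-- Two vertices are adjacent if some hyperedge contains both. -/
def Adj (G : FinHypergraph) (u v : ℕ) : Prop := ∃ e ∈ G.edges, u ∈ e ∧ v ∈ e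

/-- A hypergraph is connected if any two vertices are joined by a path of adjacencies. -/
def Connected (G : FinHypergraph) : Prop :=
  ∀ u ∈ G.verts, ∀ v ∈ G.verts, Relation.ReflTransGen G.Adj u v

/-- `D` is a connected component of `G`. -/
def IsComponent (G : FinHypergraph) (D : Finset ℕ) : Prop :=
  ∃ v ∈ G.verts, D = G.verts.filter fun u => Relation.ReflTransGen G.Adj v u

/-- The induced subhypergraph (only hyperedges entirely inside `S`). -/
def induce (G : FinHypergraph) (S : Finset ℕ) : FinHypergraph :=
  ⟨G.verts ∩ S, G.edges.filter fun e => e ⊆ S⟩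

end FinHypergraph

/-- `f` is a homomorphism from `H` to `G`. -/
def IsHom (H G : FinHypergraph) (f : ℕ → ℕ) : Prop :=
  (∀ v ∈ H.verts, f v ∈ G.verts) ∧ ∀ e ∈ H.edges, e.image f ∈ G.edges

/-- `Hom(G,H)`: the number of homomorphisms from `H` to `G`
(normalized to be `0` off `V(H)` so that the set is finite). -/
def homCount (G H : FinHypergraph) : ℕ :=
  Set.ncard {f : ℕ → ℕ | IsHom H G f ∧ ∀ v ∉ H.verts, f v = 0}

/-- `Homr(G,H)`: the number of arity-preserving homomorphisms from `H` to `G`. -/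
def homrCount (G H : FinHypergraph) : ℕ :=
  Set.ncard {f : ℕ → ℕ | IsHom H G f ∧ (∀ e ∈ H.edges, (e.image f).card = e.card) ∧
    ∀ v ∉ H.verts, f v = 0}

/-- FinHypergraph isomorphism. -/
def Isomorphic (H H' : FinHypergraph) : Prop :=
  ∃ f : ℕ → ℕ, Set.BijOn f ↑H.verts ↑H'.verts ∧
    H'.edges = H.edges.image fun e => e.image f

/-- The quotient of `H` under the partition of `V(H)` into the fibers of `f`. -/
def quotientBy (H : FinHypergraph) (f : ℕ → ℕ) : FinHypergraph :=
  ⟨H.verts.image f, H.edges.image fun e => e.image f⟩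

/-- `H'` is a quotient of `H` (by some partition of `V(H)`). -/
def IsQuotient (H H' : FinHypergraph) : Prop := ∃ f : ℕ → ℕ, H' = quotientBy H f

/-- Each fiber of `f` induces a connected (trimmed) subhypergraph of `H`. -/
def ContractMap (H : FinHypergraph) (f : ℕ → ℕ) : Prop :=
  ∀ w : ℕ, (H.trim (H.verts.filter fun v => f v = w) ⊤).Connected

/-- `H'` belongs to the contract set `Q^c(H)`: it is a quotient of `H` by a partition
all of whose parts induce connected subhypergraphs of `H`. -/
def IsContractQuotient (H H' : FinHypergraph) : Prop :=
  ∃ f : ℕ → ℕ, ContractMap H f ∧ H' = quotientBy H f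

/-- `α(H')`: the number of partitions `τ` of `V(H)` with connected parts with `H/τ ≅ H'`. -/
def alphaCount (H H' : FinHypergraph) : ℕ :=
  Set.ncard {P : Finset (Finset ℕ) | ∃ f : ℕ → ℕ, ContractMap H f ∧
    Isomorphic (quotientBy H f) H' ∧
    P = (H.verts.image f).image fun w => H.verts.filter fun v => f v = w}

/-- `|Aut(H')|`: the number of automorphisms of `H'`. -/
def autCount (H' : FinHypergraph) : ℕ :=
  Set.ncard {f : ℕ → ℕ | (∀ v ∉ H'.verts, f v = v) ∧ Set.BijOn f ↑H'.verts ↑H'.verts ∧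
    H'.edges.image (fun e => e.image f) = H'.edges}

/-- The arc relation of the `l`-skeleton of the DAH obtained by ordering `G` by `π`. -/
def SkelArc (G : FinHypergraph) (π : ℕ → ℕ) (l : ℕ∞) (u v : ℕ) : Prop :=
  ∃ e ∈ G.edges, u ∈ e ∧ v ∈ e ∧ π u < π v ∧
    ((e.filter fun w => π w < π u).card : ℕ∞) ≤ l

/-- The `l`-outdegree of a vertex in the DAH `(G, π)`. -/
def loutdeg (G : FinHypergraph) (π : ℕ → ℕ) (l : ℕ∞) (u : ℕ) : ℕ :=
  (G.verts.filter fun v => SkelArc G π l u v).card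

/-- Vertices reachable from `v` by a directed path. -/
def Reach (Adj : ℕ → ℕ → Prop) (v : ℕ) : Set ℕ := {u | Relation.ReflTransGen Adj v u}

/-- Vertices reachable from a set `A`. -/
def ReachSet (Adj : ℕ → ℕ → Prop) (A : Set ℕ) : Set ℕ :=
  {u | ∃ a ∈ A, Relation.ReflTransGen Adj a u}

/-- The sources of a DAG: vertices with no incoming arc. -/
def sourcesOf (V : Finset ℕ) (Adj : ℕ → ℕ → Prop) : Finset ℕ :=
  V.filter fun v => ¬ ∃ u ∈ V, Adj u v

/-- `b` lies on the (unique) path between `i` and `j` in `T`. -/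
def OnPath {n : ℕ} (T : SimpleGraph (Fin n)) (i j b : Fin n) : Prop :=
  ∃ p : T.Walk i j, p.IsPath ∧ b ∈ p.support

/-- `(T, β)` is a DAG-tree decomposition of the DAG `(V, Adj)`. -/
def IsDTD (V : Finset ℕ) (Adj : ℕ → ℕ → Prop) {n : ℕ}
    (T : SimpleGraph (Fin n)) (β : Fin n → Finset ℕ) : Prop :=
  T.IsTree ∧ (∀ i, β i ⊆ sourcesOf V Adj) ∧ (∀ s ∈ sourcesOf V Adj, ∃ i, s ∈ β i) ∧
    ∀ i j b, OnPath T i j b →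
      ReachSet Adj ↑(β i) ∩ ReachSet Adj ↑(β j) ⊆ ReachSet Adj ↑(β b)

/-- The DAG-treewidth of the DAG `(V, Adj)`. -/
def dagTreewidth (V : Finset ℕ) (Adj : ℕ → ℕ → Prop) : ℕ :=
  sInf {w : ℕ | ∃ (n : ℕ) (T : SimpleGraph (Fin n)) (β : Fin n → Finset ℕ),
    IsDTD V Adj T β ∧ ∀ i, (β i).card ≤ w}

/-- The `l`-DAG-treewidth of the DAH `(H, π)`. -/
def ldtwOriented (H : FinHypergraph) (π : ℕ → ℕ) (l : ℕ∞) : ℕ :=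
  dagTreewidth H.verts (SkelArc H π l)

/-- The `l`-DAG-treewidth of an undirected hypergraph:
the maximum over all acyclic orientations. -/
def ldtw (H : FinHypergraph) (l : ℕ∞) : ℕ :=
  sSup {w : ℕ | ∃ π : ℕ → ℕ, Set.InjOn π ↑H.verts ∧ w = ldtwOriented H π l}

/-- `f` is a DAH homomorphism from `(K, πK)` to `(G, πG)`. -/
def IsDAHHom (K : FinHypergraph) (πK : ℕ → ℕ) (G : FinHypergraph) (πG : ℕ → ℕ)
    (f : ℕ → ℕ) : Prop :=
  (∀ v ∈ K.verts, f v ∈ G.verts) ∧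
    ∀ e ∈ K.edges, e.image f ∈ G.edges ∧
      ∀ u ∈ e, ∀ v ∈ e, πK u < πK v → πG (f u) < πG (f v)

/-- The number of DAH homomorphisms from `(K, πK)` to `(G, πG)`. -/
def dahHomCount (G : FinHypergraph) (πG : ℕ → ℕ) (K : FinHypergraph) (πK : ℕ → ℕ) : ℕ :=
  Set.ncard {f : ℕ → ℕ | IsDAHHom K πK G πG f ∧ ∀ v ∉ K.verts, f v = 0}

/-- Two orderings of `H` give isomorphic acyclic orientations. -/
def OrientIso (H : FinHypergraph) (π₁ π₂ : ℕ → ℕ) : Prop :=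
  ∃ g : ℕ → ℕ, Set.BijOn g ↑H.verts ↑H.verts ∧
    (H.edges.image fun e => e.image g) = H.edges ∧
    ∀ u ∈ H.verts, ∀ v ∈ H.verts, (π₁ u < π₁ v ↔ π₂ (g u) < π₂ (g v))

/-- The vertices of `H` that are `l`-reachable from the set `S` in the DAH `(H, π)`. -/
def reachClosure (H : FinHypergraph) (π : ℕ → ℕ) (l : ℕ∞) (S : Set ℕ) : Finset ℕ :=
  H.verts.filter fun v => v ∈ ReachSet (SkelArc H π l) S

/-- `H⃗[S]_l`: the sub-DAH induced (0-trimmed) on the vertices `l`-reachable from `S`. -/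
def subDAH (H : FinHypergraph) (π : ℕ → ℕ) (l : ℕ∞) (S : Set ℕ) : FinHypergraph :=
  H.trim (reachClosure H π l S) 0

/-- `B'` is a child of `B` in the tree `T` rooted at `root`. -/
def IsChild {n : ℕ} (T : SimpleGraph (Fin n)) (root B B' : Fin n) : Prop :=
  T.Adj B B' ∧ OnPath T root B' B

/-- `Γ(B)`: the union of the bags in the subtree of `T` rooted at `B`. -/
def GammaSet {n : ℕ} (T : SimpleGraph (Fin n)) (root : Fin n)
    (β : Fin n → Finset ℕ) (B : Fin n) : Set ℕ :=
  {s | ∃ i, OnPath T root i B ∧ s ∈ β i}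

/-- `ext(φ, K⃗, G⃗)` relative to the agreement domain `dom`: the number of DAH homomorphisms
from `(K, πK)` to `(G, πG)` that agree with `φ` on `V(K) ∩ dom`. -/
def extCount (K : FinHypergraph) (πK : ℕ → ℕ) (G : FinHypergraph) (πG : ℕ → ℕ)
    (dom : Set ℕ) (φ : ℕ → ℕ) : ℕ :=
  Set.ncard {ψ : ℕ → ℕ | IsDAHHom K πK G πG ψ ∧ (∀ v ∉ K.verts, ψ v = 0) ∧
    ∀ v ∈ (↑K.verts : Set ℕ) ∩ dom, ψ v = φ v}

/-- The hyperedges `E_i` associated to a core `C` and a component `D`. -/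
def obstructionEdges (H : FinHypergraph) (C D : Finset ℕ) : Finset (Finset ℕ) :=
  H.edges.filter fun e => e ⊆ C ∪ D ∧ 1 < e.card

/-- `H` is an `l`-obstruction (a member of `𝓗_l`). -/
def IsLObstruction (l : ℕ∞) (H : FinHypergraph) : Prop :=
  ∃ k, 3 ≤ k ∧ ∃ C ⊆ H.verts, C.card = k ∧
    (∀ e ∈ (H.trim C l).edges, e.card ≤ 1) ∧
    (∀ D : Finset ℕ, (H.trim (H.verts \ C) ⊤).IsComponent D →
      ¬ C ⊆ (obstructionEdges H C D).biUnion id) ∧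
    ∃ Dmap : ℕ → Finset ℕ, Set.InjOn Dmap ↑C ∧
      ∀ c ∈ C, (H.trim (H.verts \ C) ⊤).IsComponent (Dmap c) ∧
        C.erase c ⊆ (obstructionEdges H C (Dmap c)).biUnion id ∧
        ∀ e ∈ obstructionEdges H C (Dmap c), c ∉ e

/-- `H` is `𝓗_l` ITS free: no induced ∞-trimmed subhypergraph is an `l`-obstruction. -/
def ITSFree (l : ℕ∞) (H : FinHypergraph) : Prop :=
  ∀ S ⊆ H.verts, ¬ IsLObstruction l (H.trim S ⊤)

/-- The hypergraph `(Hv, He)` is an `l`-connector of `X ⊆ Hv`. -/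
def IsConnector (l : ℕ∞) (Hv : Finset ℕ) (He : Finset (Finset ℕ)) (X : Finset ℕ) : Prop :=
  X ⊆ Hv ∧ FinHypergraph.Connected ⟨Hv, He⟩ ∧
    (∀ e ∈ He, 2 ≤ (e ∩ X).card → l < ((e \ X).card : ℕ∞)) ∧
    ∃ V' : Finset ℕ, (FinHypergraph.trim ⟨Hv, He⟩ (Hv \ X) ⊤).IsComponent V' ∧
      ∀ xx ∈ X, ∃ v ∈ V', ∃ e ∈ He, xx ∈ e ∧ v ∈ e

/-- Witness data for membership of `H` in `𝓗_{l,k}`. -/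
def InHlkWitness (l : ℕ∞) (k : ℕ) (H : FinHypergraph)
    (x : ℕ → ℕ) (Vp : ℕ → Finset ℕ) (Ep : ℕ → Finset (Finset ℕ)) : Prop :=
  Set.InjOn x ↑(Finset.range k) ∧
  (∀ i < k, ∀ j < k, i ≠ j → Disjoint (Vp i) (Vp j)) ∧
  (∀ i < k, Disjoint (Vp i) ((Finset.range k).image x)) ∧
  H.verts = (Finset.range k).image x ∪ (Finset.range k).biUnion Vp ∧
  (∀ i < k, ∀ j < k, i ≠ j → Disjoint (Ep i) (Ep j)) ∧
  H.edges = (Finset.range k).biUnion Ep ∧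
  ∀ i < k,
    (∀ e ∈ Ep i, e ⊆ Vp i ∪ (((Finset.range k).image x).erase (x i))) ∧
    IsConnector l (Vp i ∪ (((Finset.range k).image x).erase (x i))) (Ep i)
      (((Finset.range k).image x).erase (x i))

/-- `H ∈ 𝓗_{l,k}`. -/
def InHlk (l : ℕ∞) (k : ℕ) (H : FinHypergraph) : Prop :=
  ∃ x Vp Ep, InHlkWitness l k H x Vp Ep

/-- The DAG `(V, Adj)` contains a `k`-reachable-cycle. -/
def HasReachCycle (V : Finset ℕ) (Adj : ℕ → ℕ → Prop) (k : ℕ) : Prop :=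
  ∃ x y : ZMod k → ℕ, Function.Injective x ∧ Function.Injective y ∧
    (∀ i, x i ∈ V) ∧ (∀ i, y i ∈ V) ∧
    (∀ i, x i ∈ Reach Adj (y i) ∧ x (i + 1) ∈ Reach Adj (y i)) ∧
    ∀ v ∈ V, 2 ≤ (Set.range x ∩ Reach Adj v).ncard →
      ∃ i, Set.range x ∩ Reach Adj v = {x i, x (i + 1)}

/-- `(x, y)` form a `k`-reachable-simplex in the DAG `(V, Adj)`. -/
def IsReachSimplexPair (V : Finset ℕ) (Adj : ℕ → ℕ → Prop) {k : ℕ}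
    (x y : Fin k → ℕ) : Prop :=
  Function.Injective x ∧ Function.Injective y ∧
    (∀ i, x i ∈ V) ∧ (∀ i, y i ∈ V) ∧
    (∀ i j, j ≠ i → x j ∈ Reach Adj (y i)) ∧
    ¬ ∃ v ∈ V, ∀ i, x i ∈ Reach Adj v

/-- The DAG `(V, Adj)` contains a `k`-reachable-simplex. -/
def HasReachSimplex (V : Finset ℕ) (Adj : ℕ → ℕ → Prop) (k : ℕ) : Prop :=
  ∃ x y : Fin k → ℕ, IsReachSimplexPair V Adj x y

/-- `F` is α-acyclic. -/
def IsAlphaAcyclic (F : FinHypergraph) : Prop :=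
  ∃ (n : ℕ) (T : SimpleGraph (Fin n)) (f : Fin n → Finset ℕ),
    T.IsTree ∧ Function.Injective f ∧ (∀ i, f i ∈ F.edges) ∧
    (∀ e ∈ F.edges, ∃ i, f i = e) ∧
    ∀ i j b, OnPath T i j b → f i ∩ f j ⊆ f b

/-- The reachability hypergraph of the DAG `(V, Adj)`. -/
def reachHypergraph (V : Finset ℕ) (Adj : ℕ → ℕ → Prop) : FinHypergraph :=
  ⟨V, (sourcesOf V Adj).image fun s => V.filter fun v => v ∈ Reach Adj s⟩

/-- The clique completion of a hypergraph. -/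
def cliqueCompletion (H : FinHypergraph) : SimpleGraph ℕ where
  Adj u v := u ≠ v ∧ ∃ e ∈ H.edges, u ∈ e ∧ v ∈ e
  symm := by
    refine ⟨?_⟩
    intro u v h
    obtain ⟨huv, e, he, hu, hv⟩ := h
    exact ⟨huv.symm, e, he, hv, hu⟩
  loopless := by
    refine ⟨?_⟩
    intro u h
    exact h.1 rfl

/-- `G` has an induced cycle on `n` vertices. -/
def HasInducedCycle (G : SimpleGraph ℕ) (n : ℕ) : Prop :=
  ∃ f : ZMod n → ℕ, Function.Injective f ∧
    ∀ i j : ZMod n, G.Adj (f i) (f j) ↔ (j = i + 1 ∨ i = j + 1)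

/-- The number of colorful homomorphisms from `H` to `G` under the coloring `c`
(with color set `{1, …, |V(H)|}`). -/
def colHomCount (G H : FinHypergraph) (c : ℕ → ℕ) : ℕ :=
  Set.ncard {f : ℕ → ℕ | IsHom H G f ∧ (∀ v ∉ H.verts, f v = 0) ∧
    Set.BijOn (fun v => c (f v)) ↑H.verts ↑(Finset.Icc 1 H.verts.card)}

/-- The tensor product of hypergraphs (vertex pairs encoded by `Nat.pair`). -/
def tensor (G H : FinHypergraph) : FinHypergraph :=
  ⟨(G.verts ×ˢ H.verts).image fun p => Nat.pair p.1 p.2,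
    ((G.verts ×ˢ H.verts).image fun p => Nat.pair p.1 p.2).powerset.filter fun e =>
      (e.image fun m => (Nat.unpair m).1) ∈ G.edges ∧
      (e.image fun m => (Nat.unpair m).2) ∈ H.edges⟩

/-- `Sub(G,H)`: the number of subhypergraphs of `G` isomorphic to `H`. -/
def subCount (G H : FinHypergraph) : ℕ :=
  Set.ncard {p : Finset ℕ × Finset (Finset ℕ) |
    p.1 ⊆ G.verts ∧ (∀ e ∈ p.2, e ∈ G.edges ∧ e ⊆ p.1) ∧ Isomorphic H ⟨p.1, p.2⟩}

/-- Vertex renaming used in the construction of `G^H_l`: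
core vertices go to the matching vertex of the colorful hyperedge `e` of `G`,
vertices of `H'` outside the core go to their fresh copy indexed by `e`, and
vertices outside `H'` go to their unique copy. -/
def liftVert (S X : Finset ℕ) (π c : ℕ → ℕ) (e : Finset ℕ) (v : ℕ) : ℕ :=
  if v ∈ X then Nat.pair 0 ((e.filter fun u => c u = π v).sum id)
  else if v ∈ S then Nat.pair 2 (Nat.pair (Encodable.encode e) v)
  else Nat.pair 1 v

/-- The hypergraph `G^H_l` from the hardness construction. -/
def GHl (H G : FinHypergraph) (S X : Finset ℕ) (Vp : ℕ → Finset ℕ) (π c : ℕ → ℕ)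
    (k : ℕ) : FinHypergraph :=
  ⟨(G.verts.image fun v => Nat.pair 0 v) ∪ ((H.verts \ S).image fun v => Nat.pair 1 v) ∪
      (Finset.range k).biUnion fun i =>
        (G.edges.filter fun e => e.card = k - 1 ∧ e.image c = (Finset.range k).erase i).biUnion
          fun e => (Vp i).image fun v => Nat.pair 2 (Nat.pair (Encodable.encode e) v),
    ((H.edges.filter fun e => e ⊆ H.verts \ S).image fun e => e.image fun v => Nat.pair 1 v) ∪
      (Finset.range k).biUnion fun i =>
        (G.edges.filter fun e => e.card = k - 1 ∧ e.image c = (Finset.range k).erase i).biUnion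
          fun e =>
            (H.edges.filter fun e' => ¬ e' ⊆ H.verts \ S ∧
                e' ⊆ X ∪ Vp i ∪ (H.verts \ S)).image
              fun e' => e'.image (liftVert S X π c e)⟩

/-- The coloring of `G^H_l`. -/
def GHlColor (π c : ℕ → ℕ) (m : ℕ) : ℕ :=
  if (Nat.unpair m).1 = 0 then c (Nat.unpair m).2
  else if (Nat.unpair m).1 = 1 then π (Nat.unpair m).2
  else π (Nat.unpair (Nat.unpair m).2).2

/-- The grouping of the vertices of `G^H_l`: copied vertices first,
then the vertices of `G`, then the vertices of `V^ext`. -/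
def GHlGroup (m : ℕ) : ℕ :=
  if (Nat.unpair m).1 = 2 then 0 else if (Nat.unpair m).1 = 0 then 1 else 2

/-!
A homomorphism `f : H → G` is colorful exactly when its color set `c (f (V(H)))` is all of
`C = {1, …, h}`, and it is a homomorphism into `G(V_I)` exactly when its color set lies in `I`
(this needs the hyperedges of `H` to lie inside `V(H)`). Grouping the right-hand side by
homomorphisms `f : H → G`, the coefficient of `f` is `∑_{U ⊆ I ⊆ C} (-1)^{|C \ I|}` with `U`
its color set, which is `1` if `U = C` and `0` otherwise.
-/

open Finset

namespace Finset

theorem sum_powerset_filter_superset_neg_one_pow {α : Type*} [DecidableEq α] {U C : Finset α}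
    (hU : U ⊆ C) :
    ∑ I ∈ C.powerset with U ⊆ I, (-1 : ℤ) ^ (#C - #I) = if U = C then 1 else 0 := by
  have hcompl : ∑ I ∈ C.powerset with U ⊆ I, (-1 : ℤ) ^ (#C - #I) =
      ∑ K ∈ (C \ U).powerset, (-1 : ℤ) ^ #K := by
    refine sum_nbij' (C \ ·) (C \ ·) (fun I hI => ?_) (fun K hK => ?_) (fun I hI => ?_)
      (fun K hK => ?_) (fun I hI => ?_)
    · simp only [mem_filter, mem_powerset] at hI ⊢
      exact sdiff_subset_sdiff subset_rfl hI.2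
    · simp only [mem_filter, mem_powerset] at hK ⊢
      exact ⟨sdiff_subset,
        fun x hx => mem_sdiff.2 ⟨hU hx, fun hxK => (mem_sdiff.1 (hK hxK)).2 hx⟩⟩
    · exact Finset.sdiff_sdiff_eq_self (mem_powerset.1 (mem_filter.1 hI).1)
    · exact Finset.sdiff_sdiff_eq_self ((mem_powerset.1 hK).trans sdiff_subset)
    · rw [card_sdiff_of_subset (mem_powerset.1 (mem_filter.1 hI).1)]
  rw [hcompl, sum_powerset_neg_one_pow_card]
  exact if_congr (sdiff_eq_empty_iff_subset.trans ⟨subset_antisymm hU, fun h => h ▸ subset_rfl⟩)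
    rfl rfl

/-- Möbius inversion on the Boolean lattice of subsets of `C`. -/
theorem card_filter_eq_eq_sum_powerset {α β : Type*} [DecidableEq β] {F : Finset α}
    {C : Finset β} (g : α → Finset β) (hg : ∀ f ∈ F, g f ⊆ C) :
    (#{f ∈ F | g f = C} : ℤ) =
      ∑ I ∈ C.powerset, (-1 : ℤ) ^ (#C - #I) * #{f ∈ F | g f ⊆ I} :=
  calc (#{f ∈ F | g f = C} : ℤ)
      = ∑ f ∈ F, ∑ I ∈ C.powerset with g f ⊆ I, (-1 : ℤ) ^ (#C - #I) := by
        rw [card_filter, Nat.cast_sum]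
        refine sum_congr rfl fun f hf => ?_
        rw [sum_powerset_filter_superset_neg_one_pow (hg f hf)]
        split_ifs <;> simp
    _ = ∑ I ∈ C.powerset, (-1 : ℤ) ^ (#C - #I) * #{f ∈ F | g f ⊆ I} := by
        simp_rw [sum_filter, card_filter, Nat.cast_sum, mul_sum]
        rw [sum_comm]
        refine sum_congr rfl fun I _ => sum_congr rfl fun f _ => ?_
        split_ifs <;> simp

theorem bijOn_iff_image_eq_of_card_eq {α β : Type*} [DecidableEq β] {s : Finset α}
    {t : Finset β} {g : α → β} (hst : s.card = t.card) :
    Set.BijOn g s t ↔ s.image g = t := by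
  constructor
  · intro hg
    exact_mod_cast hg.image_eq
  · rintro rfl
    simpa using (injOn_of_card_image_eq hst.symm).bijOn_image

end Finset

namespace Set

theorem ncard_sep_eq_card_filter {α : Type*} {s : Set α} (hs : s.Finite) (p : α → Prop)
    [DecidablePred p] : {x ∈ s | p x}.ncard = #{x ∈ hs.toFinset | p x} := by
  rw [← ncard_coe_finset]
  congr 1
  ext
  simp

theorem finite_setOf_mapsTo_eqOn_compl {α β : Type*} (s : Finset α) (t : Finset β) (b : β) :
    {f : α → β | (∀ v ∈ s, f v ∈ t) ∧ ∀ v ∉ s, f v = b}.Finite := by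
  rw [← finite_coe_iff]
  refine Finite.of_injective (β := s → t) (fun f v => ⟨f.1 v, f.2.1 v v.2⟩) fun f g hfg => ?_
  ext v
  by_cases hv : v ∈ s
  · exact congrArg Subtype.val (congrFun hfg ⟨v, hv⟩)
  · rw [f.2.2 v hv, g.2.2 v hv]

end Set

namespace FinHypergraph

def homSet (G H : FinHypergraph) : Set (ℕ → ℕ) :=
  {f | IsHom H G f ∧ ∀ v ∉ H.verts, f v = 0}

theorem homSet_finite (G H : FinHypergraph) : (homSet G H).Finite :=
  (Set.finite_setOf_mapsTo_eqOn_compl H.verts G.verts 0).subset fun _ hf => ⟨hf.1.1, hf.2⟩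

theorem homSet_induce {H : FinHypergraph} (hH : H.Good) (G : FinHypergraph) (S : Finset ℕ) :
    homSet (G.induce S) H = {f ∈ homSet G H | ∀ v ∈ H.verts, f v ∈ S} := by
  ext f
  simp only [homSet, IsHom, induce, Set.mem_ofPred_eq, mem_inter, mem_filter]
  constructor
  · rintro ⟨⟨hverts, hedges⟩, hzero⟩
    exact ⟨⟨⟨fun v hv => (hverts v hv).1, fun e he => (hedges e he).1⟩, hzero⟩,
      fun v hv => (hverts v hv).2⟩
  · rintro ⟨⟨⟨hverts, hedges⟩, hzero⟩, hS⟩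
    refine ⟨⟨fun v hv => ⟨hverts v hv, hS v hv⟩, fun e he => ⟨hedges e he, ?_⟩⟩,
      hzero⟩
    simpa [image_subset_iff] using fun v hv => hS v ((hH e he).1 hv)

theorem colHomCount_eq_ncard (G H : FinHypergraph) (c : ℕ → ℕ) :
    colHomCount G H c =
      {f ∈ homSet G H | H.verts.image (fun v => c (f v)) = Icc 1 #H.verts}.ncard := by
  have hcard : #H.verts = #(Icc 1 #H.verts) := by simp
  simp only [colHomCount, homSet, bijOn_iff_image_eq_of_card_eq hcard, Set.mem_ofPred_eq, and_assoc]

end FinHypergraph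

open FinHypergraph in
theorem stmt12_general (G H : FinHypergraph) (hH : H.Good)
    (c : ℕ → ℕ) (hc : Set.MapsTo c ↑G.verts ↑(Finset.Icc 1 H.verts.card)) :
    (colHomCount G H c : ℤ) =
      ∑ I ∈ (Finset.Icc 1 H.verts.card).powerset,
        (-1 : ℤ) ^ (H.verts.card - I.card) *
          (homCount (G.induce (G.verts.filter fun v => c v ∈ I)) H : ℤ) := by
  set F := (homSet_finite G H).toFinset
  set colors : (ℕ → ℕ) → Finset ℕ := fun f => H.verts.image fun v => c (f v)
  have hcolors : ∀ f ∈ F, colors f ⊆ Icc 1 #H.verts := fun f hf => by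
    rw [Set.Finite.mem_toFinset] at hf
    simpa [colors, image_subset_iff] using fun v hv => hc (hf.1.1 v hv)
  have hcol : colHomCount G H c = #{f ∈ F | colors f = Icc 1 #H.verts} := by
    rw [colHomCount_eq_ncard, Set.ncard_sep_eq_card_filter (homSet_finite G H)]
  have hhom : ∀ I, homCount (G.induce (G.verts.filter fun v => c v ∈ I)) H =
      #{f ∈ F | colors f ⊆ I} := fun I => by
    rw [homCount, ← homSet, homSet_induce hH, Set.ncard_sep_eq_card_filter (homSet_finite G H)]
    refine congrArg card (filter_congr fun f hf => ?_)
    rw [Set.Finite.mem_toFinset] at hf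
    simpa [colors, image_subset_iff] using forall₂_congr fun v hv => and_iff_right (hf.1.1 v hv)
  rw [hcol, card_filter_eq_eq_sum_powerset colors hcolors, Nat.card_Icc, Nat.add_sub_cancel]
  simp only [hhom]

theorem stmt12 (G H : FinHypergraph) (hG : G.Good) (hH : H.Good)
    (c : ℕ → ℕ) (hc : Set.MapsTo c ↑G.verts ↑(Finset.Icc 1 H.verts.card)) :
    (colHomCount G H c : ℤ) =
      ∑ I ∈ (Finset.Icc 1 H.verts.card).powerset,
        (-1 : ℤ) ^ (H.verts.card - I.card) *
          (homCount (G.induce (G.verts.filter fun v => c v ∈ I)) H : ℤ) :=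
  stmt12_general G H hH c hc

end
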